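/- Let k be a commutative ring, (C, Δ) a coassociative k-coalgebra, Y a k-module, and π : C → Y a k-linear map such that the family of maps (π^{⊗(n+1)} ∘ Δ^n : C → Y^{⊗(n+1)})_{n≥0} is jointly injective (if π^{⊗(n+1)}(Δ^n(c)) = 0 for all n ≥ 0 then c = 0; this holds when C is cogenerated by π). Then every coderivation d : C → C with π ∘ d = 0 is zero; in particular, a coderivation of C is completely determined by π ∘ d. -/

import Mathlib

open scoped TensorProduct

noncomputable section

namespace CoTHHB

set_option linter.unusedSectionVars false

variable {k : Type*} [CommRing k] {C : Type*} [AddCommGroup C] [Module k C]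

private lemma insertNth_update {n : ℕ} [DecidableEq (Fin (n + 1))] [DecidableEq (Fin (n + 2))]
    (i : Fin (n + 2)) (a : C) (q : Fin (n + 1) → C) (j : Fin (n + 1)) (v : C) :
    Fin.insertNth (α := fun _ => C) i a (Function.update q j v) =
      Function.update (Fin.insertNth (α := fun _ => C) i a q) (i.succAbove j) v := by
  funext m
  refine Fin.succAboveCases (α := fun m =>
      Fin.insertNth (α := fun _ => C) i a (Function.update q j v) m =
        Function.update (Fin.insertNth (α := fun _ => C) i a q) (i.succAbove j) v m) i ?_ ?_ m
  · try dsimp only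
    rw [Fin.insertNth_apply_same, Function.update_of_ne (Fin.ne_succAbove i j),
      Fin.insertNth_apply_same]
  · intro j'
    try dsimp only
    rcases eq_or_ne j' j with rfl | hj
    · rw [Fin.insertNth_apply_succAbove, Function.update_self, Function.update_self]
    · rw [Fin.insertNth_apply_succAbove, Function.update_of_ne hj,
        Function.update_of_ne (Fin.succAbove_right_injective.ne hj),
        Fin.insertNth_apply_succAbove]

/-- The bilinear map `(a, b) ↦ c_0 ⊗ ⋯ ⊗ c_{p-1} ⊗ a ⊗ b ⊗ c_{p+1} ⊗ ⋯ ⊗ c_n`. -/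
def comulAtBil (n : ℕ) (p : Fin (n + 1)) (c : Fin (n + 1) → C) :
    C →ₗ[k] C →ₗ[k] ⨂[k] (_ : Fin (n + 2)), C :=
  LinearMap.mk₂ k
    (fun a b => PiTensorProduct.tprod k
      (Fin.insertNth (α := fun _ => C) p.castSucc a (Function.update c p b)))
    (fun a a' b => by
      try dsimp only
      have h : ∀ v : C, Fin.insertNth (α := fun _ => C) p.castSucc v (Function.update c p b) =
          Function.update (Fin.insertNth (α := fun _ => C) p.castSucc (0 : C)
            (Function.update c p b)) p.castSucc v :=
        fun v => (Fin.update_insertNth (α := fun _ => C) p.castSucc (0 : C) v (Function.update c p b)).symm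
      rw [h (a + a'), h a, h a']
      exact (PiTensorProduct.tprod k).map_update_add _ _ _ _)
    (fun s a b => by
      try dsimp only
      have h : ∀ v : C, Fin.insertNth (α := fun _ => C) p.castSucc v (Function.update c p b) =
          Function.update (Fin.insertNth (α := fun _ => C) p.castSucc (0 : C)
            (Function.update c p b)) p.castSucc v :=
        fun v => (Fin.update_insertNth (α := fun _ => C) p.castSucc (0 : C) v (Function.update c p b)).symm
      rw [h (s • a), h a]
      exact (PiTensorProduct.tprod k).map_update_smul _ _ _ _)
    (fun a b b' => by
      try dsimp only
      have h1 : ∀ v : C, Function.update c p v =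
          Function.update (Function.update c p (0 : C)) p v := fun v => by
        rw [Function.update_idem]
      rw [h1 (b + b'), h1 b, h1 b']
      simp only [insertNth_update]
      exact (PiTensorProduct.tprod k).map_update_add _ _ _ _)
    (fun s a b => by
      try dsimp only
      have h1 : ∀ v : C, Function.update c p v =
          Function.update (Function.update c p (0 : C)) p v := fun v => by
        rw [Function.update_idem]
      rw [h1 (s • b), h1 b]
      simp only [insertNth_update]
      exact (PiTensorProduct.tprod k).map_update_smul _ _ _ _)

/-- The coface-type operator on tensor powers: given `φ : C → C ⊗ C`, the map
`id^{⊗p} ⊗ φ ⊗ id^{⊗(n-p)} : C^{⊗(n+1)} → C^{⊗(n+2)}` applying `φ` in the `p`-th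
tensor factor. -/
def comulAt (φ : C →ₗ[k] C ⊗[k] C) (n : ℕ) (p : Fin (n + 1)) :
    (⨂[k] (_ : Fin (n + 1)), C) →ₗ[k] ⨂[k] (_ : Fin (n + 2)), C :=
  PiTensorProduct.lift
    { toFun := fun c => TensorProduct.lift (comulAtBil n p c) (φ (c p))
      map_update_add' := by
        intro inst c m x y
        have hi := Subsingleton.elim inst (instDecidableEqFin (n + 1)); subst hi
        try dsimp only
        rcases eq_or_ne m p with rfl | hmp
        · have hb : ∀ v : C, comulAtBil (k := k) (C := C) n m (Function.update c m v) =
              comulAtBil n m c := by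
            intro v
            refine LinearMap.ext fun a => LinearMap.ext fun b => ?_
            simp only [comulAtBil, LinearMap.mk₂_apply, Function.update_idem]
          simp only [hb, Function.update_self, map_add]
        · have hupd : ∀ (v a b : C), comulAtBil (k := k) (C := C) n p
              (Function.update c m v) a b =
              PiTensorProduct.tprod k (Function.update
                (p.castSucc.insertNth a (Function.update c p b)) (p.castSucc.succAbove m) v) := by
            intro v a b
            simp only [comulAtBil, LinearMap.mk₂_apply]
            rw [Function.update_comm hmp, insertNth_update]
          have hadd : TensorProduct.lift (comulAtBil (k := k) (C := C) n p
                (Function.update c m (x + y))) =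
              TensorProduct.lift (comulAtBil n p (Function.update c m x)) +
                TensorProduct.lift (comulAtBil n p (Function.update c m y)) := by
            refine TensorProduct.ext' fun a b => ?_
            simp only [TensorProduct.lift.tmul, LinearMap.add_apply, hupd]
            exact (PiTensorProduct.tprod k).map_update_add _ _ _ _
          simp only [Function.update_of_ne (Ne.symm hmp), hadd, LinearMap.add_apply]
      map_update_smul' := by
        intro inst c m s x
        have hi := Subsingleton.elim inst (instDecidableEqFin (n + 1)); subst hi
        try dsimp only
        rcases eq_or_ne m p with rfl | hmp
        · have hb : ∀ v : C, comulAtBil (k := k) (C := C) n m (Function.update c m v) =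
              comulAtBil n m c := by
            intro v
            refine LinearMap.ext fun a => LinearMap.ext fun b => ?_
            simp only [comulAtBil, LinearMap.mk₂_apply, Function.update_idem]
          simp only [hb, Function.update_self, map_smul]
        · have hupd : ∀ (v a b : C), comulAtBil (k := k) (C := C) n p
              (Function.update c m v) a b =
              PiTensorProduct.tprod k (Function.update
                (p.castSucc.insertNth a (Function.update c p b)) (p.castSucc.succAbove m) v) := by
            intro v a b
            simp only [comulAtBil, LinearMap.mk₂_apply]
            rw [Function.update_comm hmp, insertNth_update]
          have hsmul : TensorProduct.lift (comulAtBil (k := k) (C := C) n p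
                (Function.update c m (s • x))) =
              s • TensorProduct.lift (comulAtBil n p (Function.update c m x)) := by
            refine TensorProduct.ext' fun a b => ?_
            simp only [TensorProduct.lift.tmul, LinearMap.smul_apply, hupd]
            exact (PiTensorProduct.tprod k).map_update_smul _ _ _ _
          simp only [Function.update_of_ne (Ne.symm hmp), hsmul, LinearMap.smul_apply] }

/-- The iterated comultiplication `Δ^n : C → C^{⊗(n+1)}`, defined by `Δ^0 = id` and
`Δ^{n+1} = (Δ ⊗ id^{⊗n}) ∘ Δ^n`. -/
def iterComul (φ : C →ₗ[k] C ⊗[k] C) : ∀ n : ℕ, C →ₗ[k] ⨂[k] (_ : Fin (n + 1)), C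
  | 0 => (PiTensorProduct.subsingletonEquiv (R := k) (s := fun _ : Fin 1 => C) (0 : Fin 1)).symm.toLinearMap
  | n + 1 => comulAt φ n 0 ∘ₗ iterComul φ n

/-- The operator `id^{⊗i} ⊗ d ⊗ id^{⊗(n-i)} : C^{⊗(n+1)} → C^{⊗(n+1)}` applying `d` in the
`i`-th tensor factor. -/
def mapAt (d : C →ₗ[k] C) (n : ℕ) (i : Fin (n + 1)) :
    (⨂[k] (_ : Fin (n + 1)), C) →ₗ[k] ⨂[k] (_ : Fin (n + 1)), C :=
  PiTensorProduct.map (Function.update (fun _ => LinearMap.id) i d)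

end CoTHHB

open CoTHHB

/-! A coderivation `d` satisfies the Leibniz rule `Δⁿ ∘ d = (∑ᵢ id^{⊗i} ⊗ d ⊗ id^{⊗(n-i)}) ∘ Δⁿ`
for every iterated comultiplication. Every summand has a factor `π ∘ d = 0`
after applying `π^{⊗(n+1)}`, so `π^{⊗(n+1)} (Δⁿ (d c)) = 0` for all `n`, and `d c = 0` because `π`
cogenerates `C`. -/

namespace CoTHHB

variable {k : Type*} [CommRing k] {C : Type*} [AddCommGroup C] [Module k C]

@[simp]
lemma mapAt_tprod (d : C →ₗ[k] C) (n : ℕ) (i : Fin (n + 1)) (c : Fin (n + 1) → C) :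
    mapAt d n i (PiTensorProduct.tprod k c) =
      PiTensorProduct.tprod k (Function.update c i (d (c i))) := by
  rw [mapAt, PiTensorProduct.map_tprod]
  congr 1
  funext j
  rcases eq_or_ne j i with rfl | h
  · simp
  · simp [Function.update_of_ne h]

@[simp]
lemma comulAt_tprod (φ : C →ₗ[k] C ⊗[k] C) (n : ℕ) (p : Fin (n + 1)) (c : Fin (n + 1) → C) :
    comulAt φ n p (PiTensorProduct.tprod k c) = TensorProduct.lift (comulAtBil n p c) (φ (c p)) :=
  PiTensorProduct.lift.tprod c

@[simp]
lemma comulAtBil_apply (n : ℕ) (p : Fin (n + 1)) (c : Fin (n + 1) → C) (a b : C) :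
    comulAtBil (k := k) n p c a b =
      PiTensorProduct.tprod k (Fin.insertNth p.castSucc a (Function.update c p b)) :=
  rfl

lemma comulAtBil_update_self (n : ℕ) (p : Fin (n + 1)) (c : Fin (n + 1) → C) (v : C) :
    comulAtBil (k := k) n p (Function.update c p v) = comulAtBil n p c := by
  ext a b
  simp

lemma iterComul_zero_apply (Δ : C →ₗ[k] C ⊗[k] C) (c : C) :
    iterComul Δ 0 c = PiTensorProduct.tprod k fun _ => c :=
  PiTensorProduct.subsingletonEquiv_symm_apply' 0 c

lemma lift_comulAtBil_comp_map_left (d : C →ₗ[k] C) (n : ℕ) (p : Fin (n + 1))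
    (c : Fin (n + 1) → C) :
    TensorProduct.lift (comulAtBil n p c) ∘ₗ TensorProduct.map d LinearMap.id =
      mapAt d (n + 1) p.castSucc ∘ₗ TensorProduct.lift (comulAtBil n p c) := by
  ext a b
  simp [-Fin.insertNth_update]

lemma lift_comulAtBil_comp_map_right (d : C →ₗ[k] C) (n : ℕ) (p : Fin (n + 1))
    (c : Fin (n + 1) → C) :
    TensorProduct.lift (comulAtBil n p c) ∘ₗ TensorProduct.map LinearMap.id d =
      mapAt d (n + 1) p.succ ∘ₗ TensorProduct.lift (comulAtBil n p c) := by
  ext a b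
  simp [← Fin.succAbove_castSucc_self]

lemma comulAt_comp_mapAt_of_ne (φ : C →ₗ[k] C ⊗[k] C) (d : C →ₗ[k] C) (n : ℕ)
    {p i : Fin (n + 1)} (h : i ≠ p) :
    comulAt φ n p ∘ₗ mapAt d n i =
      mapAt d (n + 1) (p.castSucc.succAbove i) ∘ₗ comulAt φ n p := by
  ext c
  have hlift : TensorProduct.lift (comulAtBil n p (Function.update c i (d (c i)))) =
      mapAt d (n + 1) (p.castSucc.succAbove i) ∘ₗ TensorProduct.lift (comulAtBil n p c) := by
    have hne : p.castSucc.succAbove i ≠ p.succ := by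
      rw [← Fin.succAbove_castSucc_self]
      exact Fin.succAbove_right_injective.ne h
    ext a b
    simp [Function.update_of_ne hne, Function.update_comm h]
  simp [Function.update_of_ne h.symm, hlift]

lemma comulAt_comp_mapAt_self {Δ : C →ₗ[k] C ⊗[k] C} {d : C →ₗ[k] C}
    (hd : Δ ∘ₗ d = (TensorProduct.map d LinearMap.id + TensorProduct.map LinearMap.id d) ∘ₗ Δ)
    (n : ℕ) (p : Fin (n + 1)) :
    comulAt Δ n p ∘ₗ mapAt d n p =
      (mapAt d (n + 1) p.castSucc + mapAt d (n + 1) p.succ) ∘ₗ comulAt Δ n p := by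
  ext c
  have hΔd : Δ (d (c p)) = TensorProduct.map d LinearMap.id (Δ (c p)) +
      TensorProduct.map LinearMap.id d (Δ (c p)) := LinearMap.congr_fun hd (c p)
  have hleft := LinearMap.congr_fun (lift_comulAtBil_comp_map_left d n p c) (Δ (c p))
  have hright := LinearMap.congr_fun (lift_comulAtBil_comp_map_right d n p c) (Δ (c p))
  simp only [LinearMap.coe_comp, Function.comp_apply] at hleft hright
  simp [comulAtBil_update_self, hΔd, hleft, hright]

lemma comulAt_zero_sum_mapAt_apply {Δ : C →ₗ[k] C ⊗[k] C} {d : C →ₗ[k] C}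
    (hd : Δ ∘ₗ d = (TensorProduct.map d LinearMap.id + TensorProduct.map LinearMap.id d) ∘ₗ Δ)
    (n : ℕ) (x : ⨂[k] (_ : Fin (n + 1)), C) :
    comulAt Δ n 0 (∑ i, mapAt d n i x) = ∑ j, mapAt d (n + 1) j (comulAt Δ n 0 x) := by
  have hself := LinearMap.congr_fun (comulAt_comp_mapAt_self hd n 0) x
  have hsucc : ∀ i : Fin n, comulAt Δ n 0 (mapAt d n i.succ x) =
      mapAt d (n + 1) i.succ.succ (comulAt Δ n 0 x) := fun i =>
    LinearMap.congr_fun (comulAt_comp_mapAt_of_ne Δ d n (Fin.succ_ne_zero i)) x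
  simp only [LinearMap.coe_comp, Function.comp_apply, LinearMap.add_apply] at hself
  rw [map_sum, Fin.sum_univ_succ, Fin.sum_univ_succ, Fin.sum_univ_succ, hself, ← add_assoc]
  simp [hsucc]

lemma iterComul_coderivation_apply {Δ : C →ₗ[k] C ⊗[k] C} {d : C →ₗ[k] C}
    (hd : Δ ∘ₗ d = (TensorProduct.map d LinearMap.id + TensorProduct.map LinearMap.id d) ∘ₗ Δ)
    (n : ℕ) (c : C) :
    iterComul Δ n (d c) = ∑ i, mapAt d n i (iterComul Δ n c) := by
  induction n with
  | zero =>
    rw [Fin.sum_univ_one, iterComul_zero_apply, iterComul_zero_apply, mapAt_tprod]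
    congr 1
    funext j
    rw [Fin.fin_one_eq_zero j, Function.update_self]
  | succ n ih =>
    simp only [iterComul, LinearMap.coe_comp, Function.comp_apply, ih,
      comulAt_zero_sum_mapAt_apply hd]

lemma piTensorProduct_map_mapAt_eq_zero {Y : Type*} [AddCommGroup Y] [Module k Y]
    {π : C →ₗ[k] Y} {d : C →ₗ[k] C} (hπd : π ∘ₗ d = 0) (n : ℕ) (i : Fin (n + 1))
    (x : ⨂[k] (_ : Fin (n + 1)), C) :
    PiTensorProduct.map (fun _ => π) (mapAt d n i x) = 0 := by
  induction x using PiTensorProduct.induction_on with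
  | smul_tprod r c =>
    have hπdc : π (d (c i)) = 0 := LinearMap.congr_fun hπd (c i)
    rw [map_smul, map_smul, mapAt_tprod, PiTensorProduct.map_tprod,
      (PiTensorProduct.tprod k).map_coord_zero i (by simpa using hπdc), smul_zero]
  | add x y hx hy => rw [map_add, map_add, hx, hy, add_zero]

end CoTHHB

theorem coderivation_eq_zero_of_cogenerated_general (k : Type*) [CommRing k] (C : Type*)
    [AddCommGroup C] [Module k C] (Δ : C →ₗ[k] C ⊗[k] C)
    (Y : Type*) [AddCommGroup Y] [Module k Y] (π : C →ₗ[k] Y)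
    (hπ : ∀ c : C,
      (∀ n : ℕ, PiTensorProduct.map (fun _ : Fin (n + 1) => π) (iterComul Δ n c) = 0) → c = 0)
    (d : C →ₗ[k] C)
    (hd : Δ ∘ₗ d = (TensorProduct.map d LinearMap.id + TensorProduct.map LinearMap.id d) ∘ₗ Δ)
    (hπd : π ∘ₗ d = 0) :
    d = 0 := by
  ext c
  refine hπ (d c) fun n => ?_
  rw [iterComul_coderivation_apply hd, map_sum]
  exact Finset.sum_eq_zero fun i _ => piTensorProduct_map_mapAt_eq_zero hπd n i _

/-- Let `k` be a commutative ring, `(C, Δ)` a coassociative `k`-coalgebra, `Y` a `k`-module,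
and `π : C → Y` a `k`-linear map such that the maps `π^{⊗(n+1)} ∘ Δ^n : C → Y^{⊗(n+1)}`,
`n ≥ 0`, are jointly injective (as holds when `C` is cogenerated by `π`).  Then every
coderivation `d : C → C` (i.e. `Δ ∘ d = (d ⊗ id + id ⊗ d) ∘ Δ`) with `π ∘ d = 0` is zero;
in particular, a coderivation of `C` is completely determined by `π ∘ d`. -/
theorem coderivation_eq_zero_of_cogenerated (k : Type*) [CommRing k] (C : Type*)
    [AddCommGroup C] [Module k C] (Δ : C →ₗ[k] C ⊗[k] C)
    (hcoassoc : (TensorProduct.assoc k C C C).toLinearMap ∘ₗ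
        TensorProduct.map Δ LinearMap.id ∘ₗ Δ = TensorProduct.map LinearMap.id Δ ∘ₗ Δ)
    (Y : Type*) [AddCommGroup Y] [Module k Y] (π : C →ₗ[k] Y)
    (hπ : ∀ c : C,
      (∀ n : ℕ, PiTensorProduct.map (fun _ : Fin (n + 1) => π) (iterComul Δ n c) = 0) → c = 0)
    (d : C →ₗ[k] C)
    (hd : Δ ∘ₗ d = (TensorProduct.map d LinearMap.id + TensorProduct.map LinearMap.id d) ∘ₗ Δ)
    (hπd : π ∘ₗ d = 0) :
    d = 0 :=
  coderivation_eq_zero_of_cogenerated_general k C Δ Y π hπ d hd hπd
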